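/- arXiv:1112.3069 — 3 statements merged into one kernel-verified Lean document; each statement's English description precedes it below -/
import Mathlib

section
/- Let Q be a symmetric bilinear form on a real vector space V satisfying the Hodge index property with respect to L (Q(L,L) > 0 and Q ≤ 0 on L^⊥). If L = A + B, then Q(A,B) ≥ Q(A,L) · Q(B,L) / Q(L,L). -/
/-! The component `v = Q(L,L) A - Q(A,L) L` of `A` is `Q`-orthogonal to `L`, so `Q(v,v) ≤ 0`;
expanding gives the reverse Cauchy–Schwarz inequality `Q(A,A) Q(L,L) ≤ Q(A,L)²`. Substituting
`B = L - A` turns the claim into exactly this inequality. -/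

section HodgeIndex

variable {K V : Type*} [Field K] [LinearOrder K] [IsStrictOrderedRing K]
  [AddCommGroup V] [Module K V]

theorem LinearMap.apply_self_mul_le_sq_of_nonpos_on_orthogonal (Q : V →ₗ[K] V →ₗ[K] K)
    (hsymm : ∀ x y, Q x y = Q y x) {L : V} (hL : 0 < Q L L)
    (hneg : ∀ v, Q L v = 0 → Q v v ≤ 0) (A : V) :
    Q A A * Q L L ≤ Q A L ^ 2 := by
  set v := Q L L • A - Q A L • L
  have hLv : Q L v = 0 := by
    simp only [v, map_sub, map_smul, smul_eq_mul, hsymm L A]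
    ring
  have hvv : Q v v = Q L L * (Q A A * Q L L - Q A L ^ 2) := by
    simp only [v, map_sub, map_smul, LinearMap.sub_apply, LinearMap.smul_apply, smul_eq_mul,
      hsymm L A]
    ring
  have hQvv := hneg v hLv
  rw [hvv] at hQvv
  exact sub_nonpos.mp (nonpos_of_mul_nonpos_right hQvv hL)

end HodgeIndex

/-- If `L = A + B` and `Q` satisfies the Hodge index property w.r.t. `L`,
then `Q(A,B) ≥ Q(A,L)·Q(B,L)/Q(L,L)`. -/
theorem hodge_index_product_bound (V : Type*) [AddCommGroup V] [Module ℝ V]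
    (Q : V →ₗ[ℝ] V →ₗ[ℝ] ℝ) (hsymm : ∀ x y, Q x y = Q y x)
    (L : V) (hL : 0 < Q L L)
    (hneg : ∀ v, Q L v = 0 → Q v v ≤ 0)
    (A B : V) (hAB : A + B = L) :
    Q A L * Q B L / Q L L ≤ Q A B := by
  obtain rfl : B = L - A := eq_sub_of_add_eq' hAB
  have hCS := Q.apply_self_mul_le_sq_of_nonpos_on_orthogonal hsymm hL hneg A
  simp only [map_sub, LinearMap.sub_apply]
  rw [div_le_iff₀ hL]
  linear_combination hCS
end

section
/- Let Q be a symmetric bilinear form on a real vector space V satisfying the Hodge index property with respect to L. Suppose L = A + B, Q(A,L) ≤ Q(B,L), and Q(A,L) ≥ 2δ+1 for a nonnegative integer δ. Then Q(A,B) ≥ (2δ+1)/2, and hence, since Q(A,B) is an integer in the geometric setting, Q(A,B) ≥ δ + 1 > δ. -/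
/-- If `L = A + B`, `Q(A,L) ≤ Q(B,L)` and `Q(A,L) ≥ 2δ+1`, then
`Q(A,B) ≥ (2δ+1)/2`; and since `Q(A,B)` is an integer in the geometric
setting, `Q(A,B) ≥ δ + 1 > δ`. -/
theorem hodge_index_nodes_bound (V : Type*) [AddCommGroup V] [Module ℝ V]
    (Q : V →ₗ[ℝ] V →ₗ[ℝ] ℝ) (hsymm : ∀ x y, Q x y = Q y x)
    (L : V) (hL : 0 < Q L L)
    (hneg : ∀ v, Q L v = 0 → Q v v ≤ 0)
    (A B : V) (hAB : A + B = L) (δ : ℕ)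
    (hle : Q A L ≤ Q B L) (hample : (2 * δ + 1 : ℝ) ≤ Q A L)
    (hint : ∃ n : ℤ, Q A B = n) :
    (2 * δ + 1 : ℝ) / 2 ≤ Q A B ∧ (δ + 1 : ℝ) ≤ Q A B ∧ (δ : ℝ) < Q A B := by
  set a := Q A L with ha
  set b := Q B L with hb
  set l := Q L L with hl
  have hlab : l = a + b := by
    show Q L L = Q A L + Q B L
    rw [← hAB]
    simp only [map_add, LinearMap.add_apply]
    rw [hsymm B A]
  -- Hodge index inequality: Q(A,A) * l ≤ a^2
  have hv : Q (l • A - a • L) (l • A - a • L) ≤ 0 := by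
    apply hneg
    simp only [map_sub, map_smul, smul_eq_mul]
    rw [hsymm L A]
    ring
  have hexp : l * l * Q A A - 2 * (l * a) * Q A L + a * a * Q L L ≤ 0 := by
    have := hv
    simp only [map_sub, map_smul, LinearMap.sub_apply, LinearMap.smul_apply,
      smul_eq_mul] at this
    rw [hsymm L A] at this
    nlinarith [this]
  have hhodge : Q A A * l ≤ a * a := by
    have hl0 : 0 < l := hL
    nlinarith [hexp]
  have hQAB : Q A B = a - Q A A := by
    have : a = Q A A + Q A B := by rw [ha, ← hAB, map_add]
    linarith
  have h1 : a / 2 ≤ Q A B := by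
    have hl0 : 0 < l := hL
    have hab : a ≤ b := hle
    rw [hQAB]
    nlinarith [hhodge, hlab]
  have hmain : (2 * δ + 1 : ℝ) / 2 ≤ Q A B := le_trans (by linarith) h1
  obtain ⟨n, hn⟩ := hint
  have hδn : (δ : ℝ) < n := by
    rw [← hn]; linarith
  have hδn' : (δ : ℤ) < n := by exact_mod_cast hδn
  have hδ1 : (δ : ℤ) + 1 ≤ n := hδn'
  have h2 : (δ + 1 : ℝ) ≤ Q A B := by
    rw [hn]; exact_mod_cast hδ1
  exact ⟨hmain, h2, by rw [hn]; exact_mod_cast hδn'⟩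
end

section
/- Let C be a connected nodal curve with irreducible components C₁,…,Cₘ of which C₁,…,C_k are contracted by a map f whose image Σ has normalisation the disjoint union of the normalisations of C_{k+1},…,C_m. Writing d for the number of nodes of C, the arithmetic genus of C satisfies g(C) − g(Σ̄) = Σ_{i=1}^{k}(g(C̄ᵢ) − 1) + d, where g(C̄ᵢ) are the genera of the normalisations of the components and g(Σ̄) is the geometric genus of the image. In particular, if each contracted component of genus 0 contains at least 3 nodes, each contracted component of genus 1 contains at least 1 node, then g(C) ≥ g(Σ̄), with equality only if there are no contracted components and no nodes. -/
open Finset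

/-!
Splitting `∑ᵢ (gᵢ - 1)` into contracted and non-contracted components gives the identity
at once. For the inequality, a contracted component with `b` node branches is stable, i.e.
`2gᵢ - 2 + b ≥ 1`; summing over the `k` contracted components and using that the branches
number at most `2d` gives `k ≤ 2 (∑_{i<k} (gᵢ - 1) + d) = 2 (g(C) - g(Σ̄))`, so equality
forces `k = 0`, and then `d = 0`.
-/

theorem one_le_two_mul_sub_one_add_of_stable {g : ℤ} {b : ℕ} (hg : 0 ≤ g)
    (h0 : g = 0 → 3 ≤ b) (h1 : g = 1 → 1 ≤ b) : 1 ≤ 2 * (g - 1) + b := by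
  obtain rfl | rfl | h2 : g = 0 ∨ g = 1 ∨ 2 ≤ g := by omega
  · have := h0 rfl; omega
  · have := h1 rfl; omega
  · omega

theorem card_le_two_mul_sum_sub_one_add_of_stable {ι : Type*} (S : Finset ι) (g : ι → ℤ)
    (branches : ι → ℕ) (d : ℕ) (hg : ∀ i ∈ S, 0 ≤ g i)
    (h0 : ∀ i ∈ S, g i = 0 → 3 ≤ branches i) (h1 : ∀ i ∈ S, g i = 1 → 1 ≤ branches i)
    (hbr : ∑ i ∈ S, branches i ≤ 2 * d) :
    (#S : ℤ) ≤ 2 * ((∑ i ∈ S, (g i - 1)) + d) := by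
  have hstable : ∀ i ∈ S, 1 ≤ 2 * (g i - 1) + branches i := fun i hi =>
    one_le_two_mul_sub_one_add_of_stable (hg i hi) (h0 i hi) (h1 i hi)
  have hbr' : ∑ i ∈ S, (branches i : ℤ) ≤ 2 * d := by exact_mod_cast hbr
  calc (#S : ℤ) = ∑ _i ∈ S, (1 : ℤ) := by simp
    _ ≤ ∑ i ∈ S, (2 * (g i - 1) + branches i) := sum_le_sum hstable
    _ = 2 * ∑ i ∈ S, (g i - 1) + ∑ i ∈ S, (branches i : ℤ) := by
      rw [sum_add_distrib, mul_sum]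
    _ ≤ 2 * ((∑ i ∈ S, (g i - 1)) + d) := by linarith

theorem Fin.sum_filter_lt_add_sum_filter_le {M : Type*} [AddCommMonoid M] {m : ℕ} (k : ℕ)
    (f : Fin m → M) :
    (∑ i ∈ univ.filter (fun i : Fin m => (i : ℕ) < k), f i) +
      ∑ i ∈ univ.filter (fun i : Fin m => k ≤ (i : ℕ)), f i = ∑ i, f i := by
  simpa only [not_lt] using sum_filter_add_sum_filter_not univ (fun i : Fin m => (i : ℕ) < k) f

/-- Genus bookkeeping for a connected nodal curve with `m` components, the first
`k` of which are contracted.  `g i` is the genus of the normalisation of the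
`i`-th component, `d` the number of nodes, `branches i` the number of preimages of
nodes on the `i`-th normalised component (so `∑ branches ≤ 2d`).

Then `g(C) − g(Σ̄) = ∑_{i<k}(g(C̄ᵢ) − 1) + d`, and if each contracted rational
component contains at least 3 node branches and each contracted genus-one
component at least 1, then `g(C) ≥ g(Σ̄)`, with equality only if there are no
contracted components and no nodes. -/
theorem genus_of_contraction (m k : ℕ) (hk : k ≤ m) (d : ℕ)
    (g : Fin m → ℤ) (hg : ∀ i, 0 ≤ g i)
    (branches : Fin m → ℕ)
    (hbr : (∑ i ∈ univ.filter (fun i : Fin m => (i : ℕ) < k), branches i) ≤ 2 * d)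
    (h0 : ∀ i : Fin m, (i : ℕ) < k → g i = 0 → 3 ≤ branches i)
    (h1 : ∀ i : Fin m, (i : ℕ) < k → g i = 1 → 1 ≤ branches i)
    (gC gSigma : ℤ)
    (hgC : gC - 1 = (∑ i, (g i - 1)) + d)
    (hgSigma : gSigma - 1 = ∑ i ∈ univ.filter (fun i : Fin m => k ≤ (i : ℕ)), (g i - 1)) :
    gC - gSigma = (∑ i ∈ univ.filter (fun i : Fin m => (i : ℕ) < k), (g i - 1)) + d ∧
    gSigma ≤ gC ∧
    (gC = gSigma → k = 0 ∧ d = 0) := by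
  set S := univ.filter (fun i : Fin m => (i : ℕ) < k)
  have hdiff : gC - gSigma = (∑ i ∈ S, (g i - 1)) + d := by
    have := Fin.sum_filter_lt_add_sum_filter_le k (fun i => g i - 1)
    linarith
  have hcard : #S = k := by simpa [S, hk] using Fin.card_filter_val_lt (n := m) (m := k)
  have hk_le : (k : ℤ) ≤ 2 * (gC - gSigma) := by
    rw [hdiff, ← hcard]
    exact card_le_two_mul_sum_sub_one_add_of_stable S g branches d (fun i _ => hg i)
      (fun i hi => h0 i (mem_filter.1 hi).2) (fun i hi => h1 i (mem_filter.1 hi).2) hbr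
  refine ⟨hdiff, by linarith, fun hEq => ?_⟩
  have hk0 : k = 0 := by omega
  have hS : S = ∅ := card_eq_zero.1 (hcard.trans hk0)
  rw [hS, sum_empty] at hdiff
  exact ⟨hk0, by omega⟩
end
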